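/- arXiv:2301.09701 — 2 statements merged into one kernel-verified Lean document; each statement's English description precedes it below -/
import Mathlib

section
/- Let f be a bounded holomorphic function on the unit disc such that at a point w ∈ 𝕋 the radial limit of f fails to exist (i.e., rCl(f,w) has at least two points). Then for every non-constant entire function φ, the radial limit of φ ∘ f at w also fails to exist. -/
open Filter Topology

/-- The radial cluster set of `f` at `w`. -/
def rCl (f : ℂ → ℂ) (w : ℂ) : Set ℂ :=
  {μ | ∃ t : ℕ → ℝ, (∀ k, t k ∈ Set.Ioo (0 : ℝ) 1) ∧
    Tendsto t atTop (𝓝 1) ∧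
    Tendsto (fun k => f ((t k : ℂ) * w)) atTop (𝓝 μ)}

theorem stmt_8 (f : ℂ → ℂ)
    (hf : DifferentiableOn ℂ f (Metric.ball (0 : ℂ) 1))
    (hb : ∃ C, ∀ z ∈ Metric.ball (0 : ℂ) 1, ‖f z‖ ≤ C)
    (w : ℂ) (hw : ‖w‖ = 1)
    (μ ν : ℂ) (hμ : μ ∈ rCl f w) (hν : ν ∈ rCl f w) (hμν : μ ≠ ν)
    (φ : ℂ → ℂ) (hφ : Differentiable ℂ φ)
    (hφnc : ¬ ∃ c : ℂ, ∀ z : ℂ, φ z = c) :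
    ¬ ∃ L : ℂ, Tendsto (fun t : ℝ => φ (f ((t : ℂ) * w)))
      (nhdsWithin 1 (Set.Ioo (0 : ℝ) 1)) (𝓝 L) := by
  rintro ⟨L, hL⟩
  obtain ⟨C, hC⟩ := hb
  -- membership of [0,1) radii in the ball
  have hmem : ∀ t : ℝ, t ∈ Set.Ioo (0:ℝ) 1 → ((t : ℂ) * w) ∈ Metric.ball (0:ℂ) 1 := by
    intro t ht
    simp only [Metric.mem_ball, dist_zero_right, norm_mul, hw, mul_one,
      Complex.norm_real]
    rw [Real.norm_eq_abs, abs_of_pos ht.1]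
    exact ht.2
  -- Step 1: every radial cluster value ρ satisfies φ ρ = L
  have key : ∀ ρ ∈ rCl f w, φ ρ = L := by
    rintro ρ ⟨t, ht0, ht1, htf⟩
    have htw : Tendsto t atTop (𝓝[Set.Ioo (0:ℝ) 1] 1) :=
      tendsto_nhdsWithin_of_tendsto_nhds_of_eventually_within t ht1
        (Eventually.of_forall ht0)
    have h1 : Tendsto (fun k => φ (f ((t k : ℂ) * w))) atTop (𝓝 L) := hL.comp htw
    have h2 : Tendsto (fun k => φ (f ((t k : ℂ) * w))) atTop (𝓝 (φ ρ)) :=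
      (hφ.continuous.tendsto ρ).comp htf
    exact tendsto_nhds_unique h2 h1
  -- the continuous "distance to μ" function along the radius
  set g : ℝ → ℝ := fun t => ‖f ((t : ℂ) * w) - μ‖ with hg_def
  have hgc : ContinuousOn g (Set.Ioo (0:ℝ) 1) := by
    apply ContinuousOn.norm
    apply ContinuousOn.sub _ continuousOn_const
    exact hf.continuousOn.comp
      (Continuous.continuousOn (by continuity)) hmem
  set d : ℝ := ‖ν - μ‖ with hd_def
  have hd : 0 < d := by
    simp only [hd_def, norm_pos_iff, sub_ne_zero]
    exact hμν.symm
  -- Step 2: for every 0 < r < d there is ρ ∈ rCl f w with ‖ρ - μ‖ = r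
  have step2 : ∀ r : ℝ, 0 < r → r < d → ∃ ρ ∈ rCl f w, ‖ρ - μ‖ = r := by
    intro r hr0 hrd
    obtain ⟨t, ht0, ht1, htf⟩ := hμ
    obtain ⟨s, hs0, hs1, hsf⟩ := hν
    have hgt : Tendsto (fun k => g (t k)) atTop (𝓝 0) := by
      have : Tendsto (fun k => f ((t k : ℂ) * w) - μ) atTop (𝓝 (μ - μ)) :=
        htf.sub tendsto_const_nhds
      rw [sub_self] at this
      simpa using this.norm
    have hgs : Tendsto (fun k => g (s k)) atTop (𝓝 d) := by
      have : Tendsto (fun k => f ((s k : ℂ) * w) - μ) atTop (𝓝 (ν - μ)) :=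
        hsf.sub tendsto_const_nhds
      exact this.norm
    -- for each n, find u n ∈ Ioo 0 1 with 1 - 1/(n+1) < u n and g (u n) = r
    have hstep : ∀ n : ℕ, ∃ u : ℝ, u ∈ Set.Ioo (0:ℝ) 1 ∧ 1 - 1/(n+1) < u ∧ g u = r := by
      intro n
      have hev1 : ∀ᶠ k in atTop, 1 - 1/(n+1:ℝ) < t k :=
        ht1.eventually (eventually_gt_nhds (by
          have : (0:ℝ) < 1/(n+1) := by positivity
          linarith))
      have hev2 : ∀ᶠ k in atTop, g (t k) < r :=
        hgt.eventually (eventually_lt_nhds hr0)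
      have hev3 : ∀ᶠ k in atTop, 1 - 1/(n+1:ℝ) < s k :=
        hs1.eventually (eventually_gt_nhds (by
          have : (0:ℝ) < 1/(n+1) := by positivity
          linarith))
      have hev4 : ∀ᶠ k in atTop, r < g (s k) :=
        hgs.eventually (eventually_gt_nhds hrd)
      obtain ⟨k, hk1, hk2⟩ := (hev1.and hev2).exists
      obtain ⟨j, hj1, hj2⟩ := (hev3.and hev4).exists
      have hsub : Set.uIcc (t k) (s j) ⊆ Set.Ioo (0:ℝ) 1 :=
        Set.ordConnected_Ioo.uIcc_subset (ht0 k) (hs0 j)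
      have hiv := intermediate_value_uIcc (hgc.mono hsub)
      have hrmem : r ∈ Set.uIcc (g (t k)) (g (s j)) :=
        Set.mem_uIcc.2 (Or.inl ⟨le_of_lt hk2, le_of_lt hj2⟩)
      obtain ⟨u, hu_mem, hu_eq⟩ := hiv hrmem
      refine ⟨u, hsub hu_mem, ?_, hu_eq⟩
      rcases Set.mem_uIcc.mp hu_mem with ⟨h1, _⟩ | ⟨h1, _⟩ <;> linarith
    choose u hu1 hu2 hu3 using hstep
    have hu_t1 : Tendsto u atTop (𝓝 1) := by
      have hlow : Tendsto (fun n : ℕ => 1 - 1/(n+1:ℝ)) atTop (𝓝 1) := by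
        have : Tendsto (fun n : ℕ => 1/(n+1:ℝ)) atTop (𝓝 0) :=
          tendsto_one_div_add_atTop_nhds_zero_nat
        simpa using (tendsto_const_nhds (x := (1:ℝ))).sub this
      exact tendsto_of_tendsto_of_tendsto_of_le_of_le hlow tendsto_const_nhds
        (fun n => le_of_lt (hu2 n)) (fun n => le_of_lt (hu1 n).2)
    -- extract a convergent subsequence of f (u n * w)
    have hbdd : ∀ n, f ((u n : ℂ) * w) ∈ Metric.closedBall (0:ℂ) C := by
      intro n
      simp only [Metric.mem_closedBall, dist_zero_right]
      exact hC _ (hmem _ (hu1 n))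
    obtain ⟨ρ, _, ψ, hψ, hρ⟩ :=
      tendsto_subseq_of_bounded Metric.isBounded_closedBall hbdd
    refine ⟨ρ, ⟨u ∘ ψ, fun k => hu1 (ψ k), hu_t1.comp hψ.tendsto_atTop, hρ⟩, ?_⟩
    have h1 : Tendsto (fun k => ‖f ((u (ψ k) : ℂ) * w) - μ‖) atTop (𝓝 ‖ρ - μ‖) :=
      ((hρ.sub tendsto_const_nhds).norm)
    have h2 : (fun k => ‖f ((u (ψ k) : ℂ) * w) - μ‖) = fun _ => r := by
      funext k; exact hu3 (ψ k)
    rw [h2] at h1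
    exact (tendsto_const_nhds_iff.mp h1).symm
  -- Step 3: a sequence of points of rCl converging to μ, distinct from μ, on which φ = L
  have hρseq : ∀ n : ℕ, ∃ ρ : ℂ, ρ ∈ rCl f w ∧ ‖ρ - μ‖ = d/(n+2) := by
    intro n
    obtain ⟨ρ, h1, h2⟩ := step2 (d/(n+2)) (by positivity) (by
      rw [div_lt_iff₀ (by positivity)]
      nlinarith [hd])
    exact ⟨ρ, h1, h2⟩
  choose ρ hρ1 hρ2 using hρseq
  have hρne : ∀ n, ρ n ≠ μ := by
    intro n h
    have h2 := hρ2 n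
    rw [h, sub_self, norm_zero] at h2
    have h3 : (0:ℝ) < d/(n+2) := by positivity
    linarith
  have hρlim : Tendsto ρ atTop (𝓝 μ) := by
    rw [tendsto_iff_norm_sub_tendsto_zero]
    have : Tendsto (fun n : ℕ => d/(n+2:ℝ)) atTop (𝓝 0) := by
      apply Tendsto.div_atTop tendsto_const_nhds
      exact tendsto_atTop_add_const_right _ 2 tendsto_natCast_atTop_atTop
    simpa [hρ2] using this
  have hρlim' : Tendsto ρ atTop (𝓝[≠] μ) :=
    tendsto_nhdsWithin_of_tendsto_nhds_of_eventually_within ρ hρlim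
      (Eventually.of_forall hρne)
  have hfreq : ∃ᶠ z in 𝓝[≠] μ, φ z = (fun _ => L) z :=
    hρlim'.frequently (Frequently.of_forall (fun n => key _ (hρ1 n)))
  have hφa : AnalyticOnNhd ℂ φ Set.univ :=
    (Complex.analyticOnNhd_univ_iff_differentiable).mpr hφ
  have heq : Set.EqOn φ (fun _ => L) Set.univ :=
    hφa.eqOn_of_preconnected_of_frequently_eq analyticOnNhd_const
      isPreconnected_univ (Set.mem_univ μ) hfreq
  exact hφnc ⟨L, fun z => heq (Set.mem_univ z)⟩
end

section
/- Let B ⊂ ℝ be a ℚ-linearly independent set and f : 𝔻 → ℂ a bounded holomorphic function which is non-constant. Then the family {e^{b f} : b ∈ B} ⊂ H^∞(𝔻) is algebraically independent over ℂ. -/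
/-!
A monomial `∏ e^{d_b b f}` in the exponentials equals `e^{c f}` with `c = ∑ d_b b`, and by the
ℚ-linear independence of `B` distinct monomials give distinct frequencies `c`. So it suffices to
show that the entire functions `w ↦ e^{b w}` are algebraically independent, which reduces to
Dedekind's linear independence of the characters `w ↦ e^{c w}` of `(ℂ, +)`. Finally composition
with `f` is injective on entire functions: `f` maps the disc onto an open set by the open mapping
theorem, and an entire function vanishing there vanishes identically.
-/

open MvPolynomial Set

theorem linearIndependent_cexp_ofReal_mul :
    LinearIndependent ℂ fun c : ℝ => fun w : ℂ => Complex.exp (c * w) := by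
  let character : ℝ → Multiplicative ℂ →* ℂ := fun c =>
    { toFun := fun w => Complex.exp (c * w.toAdd)
      map_one' := by simp
      map_mul' := fun a b => by simp [mul_add, Complex.exp_add] }
  have hinj : Function.Injective character := fun c c' h => by
    have h1 := DFunLike.congr_fun h (Multiplicative.ofAdd 1)
    simp only [character, MonoidHom.coe_mk, OneHom.coe_mk, toAdd_ofAdd, mul_one,
      ← Complex.ofReal_exp, Complex.ofReal_inj] at h1
    exact Real.exp_injective h1
  exact (linearIndependent_monoidHom (Multiplicative ℂ) ℂ).comp character hinj

theorem algebraicIndependent_of_linearIndependent_aeval_monomial {R A σ : Type*}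
    [CommRing R] [CommRing A] [Algebra R A] {x : σ → A}
    (hx : LinearIndependent R fun d : σ →₀ ℕ => aeval x (monomial d (1 : R))) :
    AlgebraicIndependent R x := by
  have h : (aeval x).toLinearMap = (basisMonomials σ R).constr R
      fun d => aeval x (monomial d (1 : R)) :=
    (basisMonomials σ R).ext fun d => by rw [Module.Basis.constr_basis, coe_basisMonomials]; rfl
  rw [algebraicIndependent_iff_injective_aeval, ← AlgHom.coe_toLinearMap, h]
  exact (basisMonomials σ R).injective_constr_of_linearIndependent hx

theorem aeval_cexp_mul_monomial {ι : Type*} (v : ι → ℝ) (d : ι →₀ ℕ) :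
    aeval (fun i (w : ℂ) => Complex.exp (v i * w)) (monomial d (1 : ℂ)) =
      fun w => Complex.exp (Finsupp.linearCombination ℕ v d * w) := by
  funext w
  simp only [aeval_monomial, map_one, one_mul, Finsupp.prod, Finset.prod_apply, Pi.pow_apply,
    ← Complex.exp_nat_mul, ← Complex.exp_sum, Finsupp.linearCombination_apply, Finsupp.sum]
  push_cast
  simp [Finset.sum_mul, mul_assoc]

theorem algebraicIndependent_cexp_mul {ι : Type*} {v : ι → ℝ} (hv : LinearIndependent ℕ v) :
    AlgebraicIndependent ℂ fun i (w : ℂ) => Complex.exp (v i * w) := by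
  apply algebraicIndependent_of_linearIndependent_aeval_monomial
  simp only [aeval_cexp_mul_monomial]
  exact linearIndependent_cexp_ofReal_mul.comp _ hv

theorem differentiable_of_mem_adjoin {𝕜 E : Type*} [NontriviallyNormedField 𝕜]
    [NormedAddCommGroup E] [NormedSpace 𝕜 E] {s : Set (E → 𝕜)}
    (hs : ∀ g ∈ s, Differentiable 𝕜 g) {g : E → 𝕜} (hg : g ∈ Algebra.adjoin 𝕜 s) :
    Differentiable 𝕜 g := by
  induction hg using Algebra.adjoin_induction with
  | mem g hg => exact hs g hg
  | algebraMap c => exact differentiable_const c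
  | add g h _ _ hg hh => exact hg.add hh
  | mul g h _ _ hg hh => exact hg.mul hh

theorem Differentiable.eq_of_eqOn_comp {U : Set ℂ} {f g h : ℂ → ℂ}
    (hf : DifferentiableOn ℂ f U) (hU : IsOpen U) (hUc : IsPreconnected U)
    (hnc : ∃ z ∈ U, ∃ z' ∈ U, f z ≠ f z') (hg : Differentiable ℂ g)
    (hh : Differentiable ℂ h) (hgh : EqOn (g ∘ f) (h ∘ f) U) : g = h := by
  obtain ⟨z, hz, z', hz', hne⟩ := hnc
  have himage : IsOpen (f '' U) := by
    refine ((hf.analyticOnNhd hU).is_constant_or_isOpen hUc).resolve_left ?_ U le_rfl hU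
    rintro ⟨w, hw⟩
    exact hne ((hw z hz).trans (hw z' hz').symm)
  have hev : g =ᶠ[nhds (f z)] h := by
    filter_upwards [himage.mem_nhds (mem_image_of_mem f hz)]
    rintro _ ⟨y, hy, rfl⟩
    exact hgh hy
  exact (hg.differentiableOn.analyticOnNhd isOpen_univ).eq_of_eventuallyEq
    (hh.differentiableOn.analyticOnNhd isOpen_univ) hev

theorem stmt_9_general (B : Set ℝ) (hB : LinearIndependent ℚ ((↑) : B → ℝ))
    (f : ℂ → ℂ)
    (hf : DifferentiableOn ℂ f (Metric.ball (0 : ℂ) 1))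
    (hnc : ∃ z ∈ Metric.ball (0 : ℂ) 1, ∃ z' ∈ Metric.ball (0 : ℂ) 1, f z ≠ f z') :
    AlgebraicIndependent ℂ
      (fun b : B => fun z : Metric.ball (0 : ℂ) 1 => Complex.exp ((b : ℝ) * f z)) := by
  let compF : (ℂ → ℂ) →ₐ[ℂ] (Metric.ball (0 : ℂ) 1 → ℂ) :=
    AlgHom.pi fun z => Pi.evalAlgHom ℂ _ (f z)
  have hexp := algebraicIndependent_cexp_mul (hB.restrict_scalars' ℕ)
  refine hexp.map (f := compF) fun g hg h hh hgh => ?_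
  have hdiff : ∀ g ∈ Algebra.adjoin ℂ (range fun (b : B) (w : ℂ) => Complex.exp (b * w)),
      Differentiable ℂ g :=
    fun g => differentiable_of_mem_adjoin <| by
      rintro _ ⟨b, rfl⟩
      fun_prop
  exact (hdiff g hg).eq_of_eqOn_comp hf Metric.isOpen_ball (convex_ball 0 1).isPreconnected hnc
    (hdiff h hh) fun z hz => congrFun hgh ⟨z, hz⟩

theorem stmt_9 (B : Set ℝ) (hB : LinearIndependent ℚ ((↑) : B → ℝ))
    (f : ℂ → ℂ)
    (hf : DifferentiableOn ℂ f (Metric.ball (0 : ℂ) 1))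
    (hb : ∃ C, ∀ z ∈ Metric.ball (0 : ℂ) 1, ‖f z‖ ≤ C)
    (hnc : ∃ z ∈ Metric.ball (0 : ℂ) 1, ∃ z' ∈ Metric.ball (0 : ℂ) 1, f z ≠ f z') :
    AlgebraicIndependent ℂ
      (fun b : B => fun z : Metric.ball (0 : ℂ) 1 => Complex.exp ((b : ℝ) * f z)) :=
  stmt_9_general B hB f hf hnc
end
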